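/- arXiv:1809.01845 — 7 statements merged into one kernel-verified Lean document; each statement's English description precedes it below -/
import Mathlib

section
/- Let V be a finite set, let G be a nonempty subset of V, and define g : Set V → ℚ by g(M) = |G \ M| / |G ∪ M|. Then g is supermodular: for all M ⊆ N ⊆ V and every x ∈ V \ N, g(M ∪ {x}) − g(M) ≤ g(N ∪ {x}) − g(N). -/
/-- The Jaccard index as a function of the set of mispredictions:
`g M = |G \ M| / |G ∪ M|` (in ℚ) is supermodular. -/
theorem jaccard_misprediction_supermodular {α : Type*} [DecidableEq α]
    (V G : Finset α) (hGV : G ⊆ V) (hG : G.Nonempty)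
    (g : Finset α → ℚ)
    (hg : ∀ M : Finset α, g M = ((G \ M).card : ℚ) / ((G ∪ M).card : ℚ))
    (M N : Finset α) (hMN : M ⊆ N) (hNV : N ⊆ V)
    (x : α) (hx : x ∈ V \ N) :
    g (M ∪ {x}) - g M ≤ g (N ∪ {x}) - g N := by
  have hxN : x ∉ N := (Finset.mem_sdiff.mp hx).2
  have hxM : x ∉ M := fun h => hxN (hMN h)
  have hb1 : (1:ℚ) ≤ ((G ∪ M).card : ℚ) := by
    have : 1 ≤ (G ∪ M).card := Finset.card_pos.mpr ⟨hG.choose, Finset.mem_union_left _ hG.choose_spec⟩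
    exact_mod_cast this
  have hbd : ((G ∪ M).card : ℚ) ≤ ((G ∪ N).card : ℚ) := by
    exact_mod_cast Finset.card_le_card (Finset.union_subset_union_right hMN)
  have hca : ((G \ N).card : ℚ) ≤ ((G \ M).card : ℚ) := by
    exact_mod_cast Finset.card_le_card (Finset.sdiff_subset_sdiff (le_refl G) hMN)
  have hc0 : (0:ℚ) ≤ ((G \ N).card : ℚ) := by positivity
  by_cases hxG : x ∈ G
  · -- x ∈ G case
    have key : ∀ S : Finset α, x ∉ S →
        g (S ∪ {x}) - g S = -(1 / ((G ∪ S).card : ℚ)) := by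
      intro S hxS
      have hU : G ∪ (S ∪ {x}) = G ∪ S := by
        ext y; simp only [Finset.mem_union, Finset.mem_singleton]
        constructor
        · rintro (h | h | rfl) <;> [exact Or.inl h; exact Or.inr h; exact Or.inl hxG]
        · tauto
      have hD : G \ (S ∪ {x}) = (G \ S).erase x := by
        ext y; simp only [Finset.mem_sdiff, Finset.mem_union, Finset.mem_singleton,
          Finset.mem_erase]
        tauto
      have hxGS : x ∈ G \ S := Finset.mem_sdiff.mpr ⟨hxG, hxS⟩
      have h1 : 1 ≤ (G \ S).card := Finset.card_pos.mpr ⟨x, hxGS⟩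
      have hcard : ((G \ (S ∪ {x})).card : ℚ) = ((G \ S).card : ℚ) - 1 := by
        rw [hD, Finset.card_erase_of_mem hxGS]
        push_cast [Nat.cast_sub h1]
        ring
      rw [hg, hg, hU, hcard]
      ring
    rw [key M hxM, key N hxN]
    have hd0 : (0:ℚ) < ((G ∪ N).card : ℚ) := lt_of_lt_of_le one_pos (hb1.trans hbd)
    have := one_div_le_one_div_of_le (lt_of_lt_of_le one_pos hb1) hbd
    linarith
  · -- x ∉ G case
    have key : ∀ S : Finset α, x ∉ S →
        g (S ∪ {x}) - g S =
          -(((G \ S).card : ℚ) / (((G ∪ S).card : ℚ) * (((G ∪ S).card : ℚ) + 1))) := by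
      intro S hxS
      have hD : G \ (S ∪ {x}) = G \ S := by
        ext y; simp only [Finset.mem_sdiff, Finset.mem_union, Finset.mem_singleton]
        constructor
        · tauto
        · rintro ⟨h1, h2⟩; exact ⟨h1, fun h => h.elim h2 (fun hy => hxG (hy ▸ h1))⟩
      have hxGS : x ∉ G ∪ S := by simp [hxG, hxS]
      have hU : G ∪ (S ∪ {x}) = insert x (G ∪ S) := by
        ext y; simp only [Finset.mem_union, Finset.mem_singleton, Finset.mem_insert]
        tauto
      have hcard : ((G ∪ (S ∪ {x})).card : ℚ) = ((G ∪ S).card : ℚ) + 1 := by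
        rw [hU, Finset.card_insert_of_notMem hxGS]
        push_cast; ring
      have hbpos : (0:ℚ) < ((G ∪ S).card : ℚ) := by
        have : 1 ≤ (G ∪ S).card := Finset.card_pos.mpr ⟨hG.choose, Finset.mem_union_left _ hG.choose_spec⟩
        exact_mod_cast this
      rw [hg, hg, hD, hcard]
      field_simp
      ring
    rw [key M hxM, key N hxN]
    have hbpos : (0:ℚ) < ((G ∪ M).card : ℚ) := lt_of_lt_of_le one_pos hb1
    have hdpos : (0:ℚ) < ((G ∪ N).card : ℚ) := lt_of_lt_of_le hbpos hbd
    have ha0 : (0:ℚ) ≤ ((G \ M).card : ℚ) := by positivity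
    have hmul : ((G ∪ M).card : ℚ) * (((G ∪ M).card : ℚ) + 1) ≤
        ((G ∪ N).card : ℚ) * (((G ∪ N).card : ℚ) + 1) := by nlinarith
    have : ((G \ N).card : ℚ) / (((G ∪ N).card : ℚ) * (((G ∪ N).card : ℚ) + 1)) ≤
        ((G \ M).card : ℚ) / (((G ∪ M).card : ℚ) * (((G ∪ M).card : ℚ) + 1)) :=
      div_le_div₀ ha0 hca (by positivity) hmul
    linarith
end

section
/- Let V be a finite set, let G be a nonempty subset of V, and define the Jaccard loss Δ : Set V → ℚ by Δ(M) = 1 − |G \ M| / |G ∪ M|. Then Δ is submodular: for all M ⊆ N ⊆ V and every x ∈ V \ N, Δ(M ∪ {x}) − Δ(M) ≥ Δ(N ∪ {x}) − Δ(N). -/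
/-!
Adding `x ∉ M` to the mispredictions changes the Jaccard loss by `1 / |G ∪ M|` when `x ∈ G`
(`|G \ M|` drops by one, `|G ∪ M|` stays), and by `|G \ M| / (|G ∪ M| (|G ∪ M| + 1))` when
`x ∉ G` (`|G ∪ M|` grows by one, `|G \ M|` stays). Both gains decrease as `M` grows, since
`|G ∪ M|` increases and `|G \ M|` decreases.
-/

section

open Finset

variable {α : Type*} [DecidableEq α] {G M N : Finset α} {x : α}

def jaccardLoss (G M : Finset α) : ℚ := 1 - #(G \ M) / #(G ∪ M)

lemma jaccardLoss_insert_sub_of_mem (hxG : x ∈ G) (hxM : x ∉ M) :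
    jaccardLoss G (insert x M) - jaccardLoss G M = 1 / #(G ∪ M) := by
  have hunion : G ∪ insert x M = G ∪ M := by
    rw [union_insert, insert_eq_of_mem (mem_union_left M hxG)]
  have hcard : (#(G \ insert x M) : ℚ) + 1 = #(G \ M) := by
    rw [sdiff_insert]
    exact_mod_cast card_erase_add_one (mem_sdiff.mpr ⟨hxG, hxM⟩)
  simp only [jaccardLoss, hunion, ← hcard]
  ring

lemma jaccardLoss_insert_sub_of_notMem (hG : G.Nonempty) (hxG : x ∉ G) (hxM : x ∉ M) :
    jaccardLoss G (insert x M) - jaccardLoss G M =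
      #(G \ M) / (#(G ∪ M) * (#(G ∪ M) + 1)) := by
  have hcard : (#(G ∪ insert x M) : ℚ) = #(G ∪ M) + 1 := by
    rw [union_insert, card_insert_of_notMem (by simp [hxG, hxM]), Nat.cast_succ]
  have hpos : (0 : ℚ) < #(G ∪ M) := by
    exact_mod_cast (hG.mono subset_union_left).card_pos
  simp only [jaccardLoss, sdiff_insert_of_notMem hxG, hcard]
  field_simp
  ring

theorem jaccardLoss_insert_sub_antitone (hG : G.Nonempty) (hMN : M ⊆ N) (hxN : x ∉ N) :
    jaccardLoss G (insert x N) - jaccardLoss G N ≤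
      jaccardLoss G (insert x M) - jaccardLoss G M := by
  have hxM : x ∉ M := fun h => hxN (hMN h)
  have hunion : (#(G ∪ M) : ℚ) ≤ #(G ∪ N) := by
    exact_mod_cast card_le_card (union_subset_union_right hMN)
  have hpos : (0 : ℚ) < #(G ∪ M) := by
    exact_mod_cast (hG.mono subset_union_left).card_pos
  by_cases hxG : x ∈ G
  · rw [jaccardLoss_insert_sub_of_mem hxG hxM, jaccardLoss_insert_sub_of_mem hxG hxN]
    exact one_div_le_one_div_of_le hpos hunion
  · rw [jaccardLoss_insert_sub_of_notMem hG hxG hxM, jaccardLoss_insert_sub_of_notMem hG hxG hxN]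
    have hsdiff : (#(G \ N) : ℚ) ≤ #(G \ M) := by
      exact_mod_cast card_le_card (sdiff_subset_sdiff subset_rfl hMN)
    apply div_le_div₀ (by positivity) hsdiff (by positivity)
    gcongr

end

theorem jaccard_loss_submodular_general {α : Type*} [DecidableEq α]
    (V G : Finset α) (hG : G.Nonempty)
    (Δ : Finset α → ℚ)
    (hΔ : ∀ M : Finset α, Δ M = 1 - ((G \ M).card : ℚ) / ((G ∪ M).card : ℚ))
    (M N : Finset α) (hMN : M ⊆ N)
    (x : α) (hx : x ∈ V \ N) :
    Δ (M ∪ {x}) - Δ M ≥ Δ (N ∪ {x}) - Δ N := by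
  obtain rfl : Δ = jaccardLoss G := funext hΔ
  simp only [Finset.union_comm _ {x}, ← Finset.insert_eq]
  exact jaccardLoss_insert_sub_antitone hG hMN (Finset.mem_sdiff.mp hx).2

/-- The Jaccard loss `Δ M = 1 - |G \ M| / |G ∪ M|` (in ℚ), as a function of the
set of mispredictions, is submodular. -/
theorem jaccard_loss_submodular {α : Type*} [DecidableEq α]
    (V G : Finset α) (hGV : G ⊆ V) (hG : G.Nonempty)
    (Δ : Finset α → ℚ)
    (hΔ : ∀ M : Finset α, Δ M = 1 - ((G \ M).card : ℚ) / ((G ∪ M).card : ℚ))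
    (M N : Finset α) (hMN : M ⊆ N) (hNV : N ⊆ V)
    (x : α) (hx : x ∈ V \ N) :
    Δ (M ∪ {x}) - Δ M ≥ Δ (N ∪ {x}) - Δ N :=
  jaccard_loss_submodular_general V G hG Δ hΔ M N hMN x hx
end

section
/- There exist a finite set V, a subset G ⊆ V, subsets A ⊆ B ⊆ V, and an element x ∈ V \ B such that for f(A) = |G ∩ A| / |G ∪ A| (in ℚ) one has f(A ∪ {x}) − f(A) > f(B ∪ {x}) − f(B). Hence the Jaccard index f is in general not supermodular as a function of the prediction. -/
/-- The Jaccard index `f A = |G ∩ A| / |G ∪ A|` (in ℚ) is in general not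
supermodular as a function of the prediction. -/
theorem jaccard_not_supermodular :
    ∃ (V G A B : Finset ℕ) (x : ℕ),
      G ⊆ V ∧ A ⊆ B ∧ B ⊆ V ∧ x ∈ V \ B ∧
      ((G ∩ (A ∪ {x})).card : ℚ) / ((G ∪ (A ∪ {x})).card : ℚ) -
          ((G ∩ A).card : ℚ) / ((G ∪ A).card : ℚ) >
        ((G ∩ (B ∪ {x})).card : ℚ) / ((G ∪ (B ∪ {x})).card : ℚ) -
          ((G ∩ B).card : ℚ) / ((G ∪ B).card : ℚ) := by
  refine ⟨{0, 1}, {0}, ∅, {1}, 0, by decide, by decide, by decide, by decide, by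
    have h1 : ({0} : Finset ℕ) ∩ (∅ ∪ {0}) = {0} := by decide
    have h2 : ({0} : Finset ℕ) ∪ (∅ ∪ {0}) = {0} := by decide
    have h3 : ({0} : Finset ℕ) ∩ ∅ = ∅ := by decide
    have h4 : ({0} : Finset ℕ) ∪ ∅ = {0} := by decide
    have h5 : ({0} : Finset ℕ) ∩ ({1} ∪ {0}) = {0} := by decide
    have h6 : ({0} : Finset ℕ) ∪ ({1} ∪ {0}) = {0, 1} := by decide
    have h7 : ({0} : Finset ℕ) ∩ {1} = ∅ := by decide
    have h8 : ({0} : Finset ℕ) ∪ {1} = {0, 1} := by decide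
    rw [h1, h2, h3, h4, h5, h6, h7, h8]
    norm_num⟩
end

section
/- There exist a finite set V, a subset G ⊆ V, subsets A ⊆ B ⊆ V, and an element x ∈ V \ B such that for f(A) = |G ∩ A| / |G ∪ A| (in ℚ) one has f(A ∪ {x}) − f(A) < f(B ∪ {x}) − f(B). Hence the Jaccard index f is in general not submodular as a function of the prediction. -/
/-- The Jaccard index `f A = |G ∩ A| / |G ∪ A|` (in ℚ) is in general not
submodular as a function of the prediction. -/
theorem jaccard_not_submodular :
    ∃ (V G A B : Finset ℕ) (x : ℕ),
      G ⊆ V ∧ A ⊆ B ∧ B ⊆ V ∧ x ∈ V \ B ∧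
      ((G ∩ (A ∪ {x})).card : ℚ) / ((G ∪ (A ∪ {x})).card : ℚ) -
          ((G ∩ A).card : ℚ) / ((G ∪ A).card : ℚ) <
        ((G ∩ (B ∪ {x})).card : ℚ) / ((G ∪ (B ∪ {x})).card : ℚ) -
          ((G ∩ B).card : ℚ) / ((G ∪ B).card : ℚ) := by
  refine ⟨{0,1,2}, {0}, {0}, {0,1}, 2, by decide, by decide, by decide, by decide, ?_⟩
  have h1 : (({0} : Finset ℕ) ∩ (({0}:Finset ℕ) ∪ {2})).card = 1 := by decide
  have h2 : (({0}:Finset ℕ) ∪ (({0}:Finset ℕ) ∪ {2})).card = 2 := by decide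
  have h3 : ((({0}:Finset ℕ) ∩ {0})).card = 1 := by decide
  have h4 : ((({0}:Finset ℕ) ∪ {0})).card = 1 := by decide
  have h5 : (({0}:Finset ℕ) ∩ (({0,1}:Finset ℕ) ∪ {2})).card = 1 := by decide
  have h6 : (({0}:Finset ℕ) ∪ (({0,1}:Finset ℕ) ∪ {2})).card = 3 := by decide
  have h7 : (({0}:Finset ℕ) ∩ ({0,1}:Finset ℕ)).card = 1 := by decide
  have h8 : (({0}:Finset ℕ) ∪ ({0,1}:Finset ℕ)).card = 2 := by decide
  rw [h1,h2,h3,h4,h5,h6,h7,h8]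
  norm_num
end

section
/- Let V be a finite set, G ⊆ V nonempty, A ⊆ B ⊆ V, and x ∈ G with x ∉ B. Then for f(A) = |G ∩ A| / |G ∪ A| in ℚ one has the exact identity f(A ∪ {x}) − f(A) − (f(B ∪ {x}) − f(B)) = 1/|G ∪ A| − 1/|G ∪ B|, and this quantity is nonnegative, with strict positivity whenever |G ∪ A| < |G ∪ B|. -/
open Finset

section Jaccard

variable {α : Type*} [DecidableEq α]

def jaccard (G S : Finset α) : ℚ := (#(G ∩ S) : ℚ) / #(G ∪ S)

lemma card_union_pos_of_mem_left {G S : Finset α} {x : α} (hxG : x ∈ G) : 0 < #(G ∪ S) :=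
  card_pos.mpr ⟨x, mem_union_left S hxG⟩

/-- Adding an element of `G` leaves the union `G ∪ S` unchanged and grows the intersection by one. -/
lemma jaccard_union_singleton_sub {G S : Finset α} {x : α} (hxG : x ∈ G) (hxS : x ∉ S) :
    jaccard G (S ∪ {x}) - jaccard G S = 1 / #(G ∪ S) := by
  have hunion : G ∪ (S ∪ {x}) = G ∪ S := by
    rw [union_singleton, union_insert, insert_eq_of_mem (mem_union_left S hxG)]
  have hinter : #(G ∩ (S ∪ {x})) = #(G ∩ S) + 1 := by
    rw [union_singleton, inter_insert_of_mem hxG,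
      card_insert_of_notMem fun h => hxS (mem_inter.mp h).2]
  have hpos : (0 : ℚ) < #(G ∪ S) := by exact_mod_cast card_union_pos_of_mem_left hxG
  rw [jaccard, jaccard, hunion, hinter]
  field_simp
  push_cast
  ring

end Jaccard

theorem jaccard_case_x_mem_G_general {α : Type*} [DecidableEq α]
    (G A B : Finset α)
    (hAB : A ⊆ B)
    (f : Finset α → ℚ)
    (hf : ∀ S : Finset α, f S = ((G ∩ S).card : ℚ) / ((G ∪ S).card : ℚ))
    (x : α) (hxG : x ∈ G) (hxB : x ∉ B) :
    f (A ∪ {x}) - f A - (f (B ∪ {x}) - f B) =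
      1 / ((G ∪ A).card : ℚ) - 1 / ((G ∪ B).card : ℚ) ∧
    0 ≤ 1 / ((G ∪ A).card : ℚ) - 1 / ((G ∪ B).card : ℚ) ∧
    ((G ∪ A).card < (G ∪ B).card →
      0 < 1 / ((G ∪ A).card : ℚ) - 1 / ((G ∪ B).card : ℚ)) := by
  obtain rfl : f = jaccard G := funext hf
  have hposA : (0 : ℚ) < #(G ∪ A) := by exact_mod_cast card_union_pos_of_mem_left hxG
  have hle : (#(G ∪ A) : ℚ) ≤ #(G ∪ B) := by
    exact_mod_cast card_le_card (union_subset_union_right hAB)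
  refine ⟨?_, sub_nonneg.mpr (one_div_le_one_div_of_le hposA hle), fun hlt => ?_⟩
  · rw [jaccard_union_singleton_sub hxG fun hxA => hxB (hAB hxA),
      jaccard_union_singleton_sub hxG hxB]
  · exact sub_pos.mpr (one_div_lt_one_div_of_lt hposA (by exact_mod_cast hlt))

/-- Case (i) of the non-supermodularity argument: for `x ∈ G`, `x ∉ B`, the
difference of marginal gains of `f A = |G ∩ A| / |G ∪ A|` equals
`1/|G ∪ A| - 1/|G ∪ B|`, which is nonnegative, and strictly positive when
`|G ∪ A| < |G ∪ B|`. -/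
theorem jaccard_case_x_mem_G {α : Type*} [DecidableEq α]
    (V G A B : Finset α) (hGV : G ⊆ V) (hG : G.Nonempty)
    (hAB : A ⊆ B) (hBV : B ⊆ V)
    (f : Finset α → ℚ)
    (hf : ∀ S : Finset α, f S = ((G ∩ S).card : ℚ) / ((G ∪ S).card : ℚ))
    (x : α) (hxG : x ∈ G) (hxB : x ∉ B) :
    f (A ∪ {x}) - f A - (f (B ∪ {x}) - f B) =
      1 / ((G ∪ A).card : ℚ) - 1 / ((G ∪ B).card : ℚ) ∧
    0 ≤ 1 / ((G ∪ A).card : ℚ) - 1 / ((G ∪ B).card : ℚ) ∧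
    ((G ∪ A).card < (G ∪ B).card →
      0 < 1 / ((G ∪ A).card : ℚ) - 1 / ((G ∪ B).card : ℚ)) :=
  jaccard_case_x_mem_G_general G A B hAB f hf x hxG hxB
end

section
/- Let V be a finite set, G ⊆ V nonempty, M ⊆ N ⊆ V, and x ∈ G with x ∉ N. Then for g(M) = |G \ M| / |G ∪ M| in ℚ one has the exact identity g(M ∪ {x}) − g(M) − (g(N ∪ {x}) − g(N)) = −1/|G ∪ M| + 1/|G ∪ N|, and this quantity is ≤ 0. -/
/-!
Adding a ground-truth element `x ∉ S` to the mispredictions leaves `G ∪ S` unchanged and removes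
`x` from `G \ S`, so the marginal gain of `x` at `S` is `-1 / |G ∪ S|`. The difference of marginal
gains at `M ⊆ N` is therefore `-1 / |G ∪ M| + 1 / |G ∪ N|`, which is nonpositive since
`|G ∪ M| ≤ |G ∪ N|`.
-/

namespace Finset

variable {α : Type*} [DecidableEq α] {G S : Finset α} {x : α}

theorem union_union_singleton_of_mem (hxG : x ∈ G) : G ∪ (S ∪ {x}) = G ∪ S := by
  rw [union_comm S, ← insert_eq, union_insert, insert_eq_of_mem (mem_union_left S hxG)]

theorem cast_card_sdiff_union_singleton (hxG : x ∈ G) (hxS : x ∉ S) :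
    ((G \ (S ∪ {x})).card : ℚ) = (G \ S).card - 1 := by
  rw [union_comm S, ← insert_eq, sdiff_insert, cast_card_erase_of_mem (mem_sdiff.2 ⟨hxG, hxS⟩)]

theorem jaccard_union_singleton_sub_of_mem (hxG : x ∈ G) (hxS : x ∉ S) :
    ((G \ (S ∪ {x})).card : ℚ) / (G ∪ (S ∪ {x})).card - ((G \ S).card : ℚ) / (G ∪ S).card =
      -1 / (G ∪ S).card := by
  rw [union_union_singleton_of_mem hxG, cast_card_sdiff_union_singleton hxG hxS]
  ring

end Finset

open Finset in
theorem jaccard_misprediction_case_mem_general {α : Type*} [DecidableEq α]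
    (G M N : Finset α)
    (hMN : M ⊆ N)
    (g : Finset α → ℚ)
    (hg : ∀ S : Finset α, g S = ((G \ S).card : ℚ) / ((G ∪ S).card : ℚ))
    (x : α) (hxG : x ∈ G) (hxN : x ∉ N) :
    g (M ∪ {x}) - g M - (g (N ∪ {x}) - g N) =
      -1 / ((G ∪ M).card : ℚ) + 1 / ((G ∪ N).card : ℚ) ∧
    -1 / ((G ∪ M).card : ℚ) + 1 / ((G ∪ N).card : ℚ) ≤ 0 := by
  have gain_M := jaccard_union_singleton_sub_of_mem hxG (fun hxM => hxN (hMN hxM))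
  have gain_N := jaccard_union_singleton_sub_of_mem hxG hxN
  have card_pos : (0 : ℚ) < (G ∪ M).card := by
    exact_mod_cast card_pos.2 ⟨x, mem_union_left M hxG⟩
  have card_le : ((G ∪ M).card : ℚ) ≤ (G ∪ N).card := by
    exact_mod_cast card_le_card (union_subset_union_right hMN)
  refine ⟨by simp only [hg]; rw [gain_M, gain_N]; ring, ?_⟩
  have := one_div_le_one_div_of_le card_pos card_le
  rw [neg_div]
  linarith

/-- Case (i) of the supermodularity proof for the Jaccard index of
mispredictions: for `x ∈ G`, `x ∉ N`, the difference of marginal gains equals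
`-1/|G ∪ M| + 1/|G ∪ N|`, which is `≤ 0`. -/
theorem jaccard_misprediction_case_mem {α : Type*} [DecidableEq α]
    (V G M N : Finset α) (hGV : G ⊆ V) (hG : G.Nonempty)
    (hMN : M ⊆ N) (hNV : N ⊆ V)
    (g : Finset α → ℚ)
    (hg : ∀ S : Finset α, g S = ((G \ S).card : ℚ) / ((G ∪ S).card : ℚ))
    (x : α) (hxG : x ∈ G) (hxN : x ∉ N) :
    g (M ∪ {x}) - g M - (g (N ∪ {x}) - g N) =
      -1 / ((G ∪ M).card : ℚ) + 1 / ((G ∪ N).card : ℚ) ∧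
    -1 / ((G ∪ M).card : ℚ) + 1 / ((G ∪ N).card : ℚ) ≤ 0 :=
  jaccard_misprediction_case_mem_general G M N hMN g hg x hxG hxN
end

section
/- Let V be a finite set, G ⊆ V nonempty, M ⊆ N ⊆ V, and x ∈ V with x ∉ N and x ∉ G. Then for g(M) = |G \ M| / |G ∪ M| in ℚ one has |G \ M|/(|G ∪ M| + 1) − |G \ M|/|G ∪ M| − |G \ N|/(|G ∪ N| + 1) + |G \ N|/|G ∪ N| ≤ 0; equivalently, g(M ∪ {x}) − g(M) ≤ g(N ∪ {x}) − g(N). -/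
lemma jaccard_aux_ineq (a b c d : ℚ) (hb : 1 ≤ b) (hbd : b ≤ d)
    (hc : 0 ≤ c) (hca : c ≤ a) :
    a / (b + 1) - a / b - c / (d + 1) + c / d ≤ 0 := by
  have hb0 : (0:ℚ) < b := lt_of_lt_of_le one_pos hb
  have hd0 : (0:ℚ) < d := lt_of_lt_of_le hb0 hbd
  have hb1 : (0:ℚ) < b + 1 := by linarith
  have hd1 : (0:ℚ) < d + 1 := by linarith
  have h1 : a / (b + 1) - a / b = -(a / (b * (b + 1))) := by
    field_simp; ring
  have h2 : c / (d + 1) - c / d = -(c / (d * (d + 1))) := by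
    field_simp; ring
  have key : c / (d * (d + 1)) ≤ a / (b * (b + 1)) := by
    apply div_le_div₀ (le_trans hc hca) hca (by positivity)
    nlinarith
  linarith

/-- Case (ii) of the supermodularity proof for the Jaccard index of
mispredictions: for `x ∉ N`, `x ∉ G`, the explicit inequality of marginal
gains holds, and equivalently `g (M ∪ {x}) - g M ≤ g (N ∪ {x}) - g N`. -/
theorem jaccard_misprediction_case_not_mem {α : Type*} [DecidableEq α]
    (V G M N : Finset α) (hGV : G ⊆ V) (hG : G.Nonempty)
    (hMN : M ⊆ N) (hNV : N ⊆ V)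
    (g : Finset α → ℚ)
    (hg : ∀ S : Finset α, g S = ((G \ S).card : ℚ) / ((G ∪ S).card : ℚ))
    (x : α) (hxV : x ∈ V) (hxN : x ∉ N) (hxG : x ∉ G) :
    ((G \ M).card : ℚ) / (((G ∪ M).card : ℚ) + 1) -
        ((G \ M).card : ℚ) / ((G ∪ M).card : ℚ) -
        ((G \ N).card : ℚ) / (((G ∪ N).card : ℚ) + 1) +
        ((G \ N).card : ℚ) / ((G ∪ N).card : ℚ) ≤ 0 ∧
    g (M ∪ {x}) - g M ≤ g (N ∪ {x}) - g N := by
  have hb : (1:ℚ) ≤ ((G ∪ M).card : ℚ) := by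
    have : 1 ≤ (G ∪ M).card := Finset.card_pos.mpr (hG.mono Finset.subset_union_left)
    exact_mod_cast this
  have hbd : ((G ∪ M).card : ℚ) ≤ ((G ∪ N).card : ℚ) := by
    exact_mod_cast Finset.card_le_card (Finset.union_subset_union_right hMN)
  have hca : ((G \ N).card : ℚ) ≤ ((G \ M).card : ℚ) := by
    exact_mod_cast Finset.card_le_card (Finset.sdiff_subset_sdiff le_rfl hMN)
  have main := jaccard_aux_ineq _ _ _ _ hb hbd (by positivity) hca
  refine ⟨main, ?_⟩
  have hxM : x ∉ M := fun h => hxN (hMN h)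
  have e1 : (G ∪ (M ∪ {x})).card = (G ∪ M).card + 1 := by
    rw [show G ∪ (M ∪ {x}) = insert x (G ∪ M) by ext y; simp]
    rw [Finset.card_insert_of_notMem (by simp [hxG, hxM])]
  have e2 : G \ (M ∪ {x}) = G \ M := by ext y; simp; aesop
  have e3 : (G ∪ (N ∪ {x})).card = (G ∪ N).card + 1 := by
    rw [show G ∪ (N ∪ {x}) = insert x (G ∪ N) by ext y; simp]
    rw [Finset.card_insert_of_notMem (by simp [hxG, hxN])]
  have e4 : G \ (N ∪ {x}) = G \ N := by ext y; simp; aesop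
  rw [hg, hg, hg, hg, e1, e2, e3, e4]
  push_cast
  linarith
end
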